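/- Cost formula with process noise (the cost expression of Theorem 1 in covariance form): for every stable gain θ and positive semidefinite Σ₁, Σ_w ∈ ℝ^{d_x×d_x}, define the covariance recursion Σ_{t+1} := C_θ Σ_t C_θᵀ + Σ_w for t ≥ 1 with initial value Σ₁. Then the series (1−γ) ∑_{t=1}^∞ γ^{t−1} tr( (Q + θᵀRθ) Σ_t ) converges and equals (1−γ) tr( M(θ) Σ₁ ) + γ tr( M(θ) Σ_w ). -/

import Mathlib

open Matrix
open scoped Matrix.Norms.L2Operator

noncomputable section

/-- The closed-loop matrix `C_θ = A - B θ`. -/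
def Cl {dx du : ℕ} (A : Matrix (Fin dx) (Fin dx) ℝ) (B : Matrix (Fin dx) (Fin du) ℝ)
    (θ : Matrix (Fin du) (Fin dx) ℝ) : Matrix (Fin dx) (Fin dx) ℝ :=
  A - B * θ

/-- A closed-loop matrix `C` is stable (for discount factor `γ`) if
`‖C^t‖ ≤ c rᵗ γ^{-t/2}` (L2 operator norm) for some `c > 0` and `r ∈ (0,1)`. -/
def IsStable (γ : ℝ) {dx : ℕ} (C : Matrix (Fin dx) (Fin dx) ℝ) : Prop :=
  ∃ c > (0:ℝ), ∃ r ∈ Set.Ioo (0:ℝ) 1, ∀ t : ℕ, ‖C ^ t‖ ≤ c * r ^ t * γ ^ (-(t : ℝ) / 2)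

/-- `M(θ) := ∑_{t=0}^∞ γᵗ (C_θᵀ)ᵗ (Q + θᵀ R θ) C_θᵗ`. -/
def Mmat {dx du : ℕ} (γ : ℝ) (A : Matrix (Fin dx) (Fin dx) ℝ) (B : Matrix (Fin dx) (Fin du) ℝ)
    (Q : Matrix (Fin dx) (Fin dx) ℝ) (R : Matrix (Fin du) (Fin du) ℝ)
    (θ : Matrix (Fin du) (Fin dx) ℝ) : Matrix (Fin dx) (Fin dx) ℝ :=
  ∑' t : ℕ, γ ^ t • ((Cl A B θ)ᵀ ^ t * (Q + θᵀ * R * θ) * Cl A B θ ^ t)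

/-- `Σ_θ := (1-γ) ∑_{t=0}^∞ γᵗ C_θᵗ Σ₁ (C_θᵀ)ᵗ`. -/
def SigMat {dx du : ℕ} (γ : ℝ) (A : Matrix (Fin dx) (Fin dx) ℝ) (B : Matrix (Fin dx) (Fin du) ℝ)
    (S1 : Matrix (Fin dx) (Fin dx) ℝ) (θ : Matrix (Fin du) (Fin dx) ℝ) :
    Matrix (Fin dx) (Fin dx) ℝ :=
  (1 - γ) • ∑' t : ℕ, γ ^ t • (Cl A B θ ^ t * S1 * (Cl A B θ)ᵀ ^ t)

/-- `E_θ := (R + γ Bᵀ M(θ) B) θ - γ Bᵀ M(θ) A`. -/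
def Emat {dx du : ℕ} (γ : ℝ) (A : Matrix (Fin dx) (Fin dx) ℝ) (B : Matrix (Fin dx) (Fin du) ℝ)
    (Q : Matrix (Fin dx) (Fin dx) ℝ) (R : Matrix (Fin du) (Fin du) ℝ)
    (θ : Matrix (Fin du) (Fin dx) ℝ) : Matrix (Fin du) (Fin dx) ℝ :=
  (R + γ • (Bᵀ * Mmat γ A B Q R θ * B)) * θ - γ • (Bᵀ * Mmat γ A B Q R θ * A)

/-- `J(θ) := (1-γ) tr(M(θ) Σ₁)`. -/
def Jcost {dx du : ℕ} (γ : ℝ) (A : Matrix (Fin dx) (Fin dx) ℝ) (B : Matrix (Fin dx) (Fin du) ℝ)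
    (Q : Matrix (Fin dx) (Fin dx) ℝ) (R : Matrix (Fin du) (Fin du) ℝ)
    (S1 : Matrix (Fin dx) (Fin dx) ℝ) (θ : Matrix (Fin du) (Fin dx) ℝ) : ℝ :=
  (1 - γ) * (Mmat γ A B Q R θ * S1).trace

/-- The smallest singular value of a square matrix, as the infimum of `‖Ax‖` over unit vectors. -/
def sigmaMin {m : Type*} [Fintype m] [DecidableEq m] (A : Matrix m m ℝ) : ℝ :=
  ⨅ x : {x : EuclideanSpace ℝ m // ‖x‖ = 1}, ‖Matrix.toEuclideanLin A x.1‖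

/-- The Frobenius norm of a matrix. -/
def frobNorm {m n : Type*} [Fintype m] [Fintype n] (A : Matrix m n ℝ) : ℝ :=
  Real.sqrt (∑ i, ∑ j, A i j ^ 2)

/-! Unrolling the recursion gives `Σ_t = C^t Σ₁ (Cᵀ)^t + ∑_{s<t} C^s Σ_w (Cᵀ)^s` with `C = C_θ`.
By cyclicity of the trace, `∑_t γ^t tr((Q + θᵀRθ) C^t W (Cᵀ)^t) = tr(M(θ) W)` for every `W`,
the series converging absolutely because stability makes `γ^t ‖C^t‖²` decay geometrically.
The `Σ₁` part thus contributes `(1-γ) tr(M(θ) Σ₁)`, and the noise part is the Cauchy product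
of the series for `W = Σ_w` with `∑ γᵏ = (1-γ)⁻¹`, which leaves `γ tr(M(θ) Σ_w)`. -/

open Finset

lemma eq_pow_mul_mul_pow_add_sum_range {α : Type*} [Semiring α] {C D W : α} {X : ℕ → α}
    (hX : ∀ t, X (t + 1) = C * X t * D + W) (t : ℕ) :
    X t = C ^ t * X 0 * D ^ t + ∑ s ∈ range t, C ^ s * W * D ^ s := by
  induction t with
  | zero => simp
  | succ t ih =>
    rw [hX, ih, sum_range_succ', mul_add, add_mul, mul_sum, sum_mul, add_assoc]
    simp only [pow_succ' C, pow_succ D, mul_assoc, pow_zero, one_mul, mul_one]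

lemma hasSum_geometric_mul_sum_range {γ L : ℝ} {a : ℕ → ℝ} (hγ : |γ| < 1)
    (h : HasSum (fun s => γ ^ s * a s) L) :
    HasSum (fun t => (1 - γ) * γ ^ t * ∑ s ∈ range t, a s) (γ * L) := by
  have hcauchy := hasSum_sum_range_mul_of_summable_norm h.summable.norm
    (summable_geometric_of_abs_lt_one hγ).norm
  rw [h.tsum_eq, tsum_geometric_of_abs_lt_one hγ] at hcauchy
  have hterm : ∀ n, (1 - γ) * γ ^ (n + 1) * ∑ s ∈ range (n + 1), a s =
      (1 - γ) * γ * ∑ k ∈ range (n + 1), γ ^ k * a k * γ ^ (n - k) := by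
    intro n
    rw [mul_sum, mul_sum]
    refine sum_congr rfl fun k hk => ?_
    rw [pow_succ, ← pow_mul_pow_sub γ (mem_range_succ_iff.mp hk)]
    ring
  have hvalue : γ * L - ∑ t ∈ range 1, (1 - γ) * γ ^ t * ∑ s ∈ range t, a s =
      (1 - γ) * γ * (L * (1 - γ)⁻¹) := by
    have : 1 - γ ≠ 0 := by linarith [abs_lt.mp hγ]
    field_simp
    simp
  refine (hasSum_nat_add_iff' 1).mp ?_
  rw [hvalue]
  simp only [hterm]
  exact hcauchy.mul_left _

lemma IsStable.pow_mul_norm_pow_sq_le {γ : ℝ} (hγ : 0 < γ) {d : ℕ}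
    {C : Matrix (Fin d) (Fin d) ℝ} (hC : IsStable γ C) :
    ∃ K ρ : ℝ, 0 ≤ ρ ∧ ρ < 1 ∧ ∀ t : ℕ, γ ^ t * ‖C ^ t‖ ^ 2 ≤ K * ρ ^ t := by
  obtain ⟨c, -, r, ⟨hr0, hr1⟩, hbound⟩ := hC
  refine ⟨c ^ 2, r ^ 2, by positivity, by nlinarith, fun t => ?_⟩
  have hcancel : γ ^ t * (γ ^ (-(t : ℝ) / 2)) ^ 2 = 1 := by
    rw [← Real.rpow_natCast γ, ← Real.rpow_natCast _ 2, ← Real.rpow_mul hγ.le,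
      ← Real.rpow_add hγ]
    norm_num
  calc γ ^ t * ‖C ^ t‖ ^ 2
      ≤ γ ^ t * (c * r ^ t * γ ^ (-(t : ℝ) / 2)) ^ 2 := by
        gcongr
        exact hbound t
    _ = c ^ 2 * (r ^ 2) ^ t := by
        rw [mul_pow, mul_left_comm, hcancel]
        ring

lemma l2_opNorm_transpose {m n : Type*} [Fintype m] [Fintype n] [DecidableEq m]
    [DecidableEq n] (A : Matrix m n ℝ) : ‖Aᵀ‖ = ‖A‖ := by
  rw [← conjTranspose_eq_transpose_of_trivial, l2_opNorm_conjTranspose]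

lemma IsStable.summable_smul_transpose_pow_mul_mul_pow {γ : ℝ} (hγ : 0 < γ) {d : ℕ}
    {C : Matrix (Fin d) (Fin d) ℝ} (hC : IsStable γ C) (P : Matrix (Fin d) (Fin d) ℝ) :
    Summable fun t : ℕ => γ ^ t • (Cᵀ ^ t * P * C ^ t) := by
  obtain ⟨K, ρ, hρ0, hρ1, hbound⟩ := hC.pow_mul_norm_pow_sq_le hγ
  refine Summable.of_norm_bounded ((summable_geometric_of_lt_one hρ0 hρ1).mul_left (K * ‖P‖))
    fun t => ?_
  calc ‖γ ^ t • (Cᵀ ^ t * P * C ^ t)‖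
      ≤ γ ^ t * (‖Cᵀ ^ t‖ * ‖P‖ * ‖C ^ t‖) := by
        rw [norm_smul, Real.norm_of_nonneg (by positivity)]
        gcongr
        exact (l2_opNorm_mul _ _).trans
          (mul_le_mul_of_nonneg_right (l2_opNorm_mul _ _) (norm_nonneg _))
    _ = γ ^ t * ‖C ^ t‖ ^ 2 * ‖P‖ := by rw [← transpose_pow, l2_opNorm_transpose]; ring
    _ ≤ K * ρ ^ t * ‖P‖ := mul_le_mul_of_nonneg_right (hbound t) (norm_nonneg _)
    _ = K * ‖P‖ * ρ ^ t := by ring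

lemma hasSum_trace_Mmat_mul {dx du : ℕ} {γ : ℝ} (hγ : 0 < γ)
    {A : Matrix (Fin dx) (Fin dx) ℝ} {B : Matrix (Fin dx) (Fin du) ℝ}
    (Q : Matrix (Fin dx) (Fin dx) ℝ) (R : Matrix (Fin du) (Fin du) ℝ)
    {θ : Matrix (Fin du) (Fin dx) ℝ} (hθ : IsStable γ (Cl A B θ))
    (W : Matrix (Fin dx) (Fin dx) ℝ) :
    HasSum (fun t : ℕ => γ ^ t *
        ((Q + θᵀ * R * θ) * (Cl A B θ ^ t * W * (Cl A B θ)ᵀ ^ t)).trace)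
      (Mmat γ A B Q R θ * W).trace := by
  have hM : HasSum (fun t : ℕ => γ ^ t • ((Cl A B θ)ᵀ ^ t * (Q + θᵀ * R * θ) * Cl A B θ ^ t))
      (Mmat γ A B Q R θ) :=
    (hθ.summable_smul_transpose_pow_mul_mul_pow hγ (Q + θᵀ * R * θ)).hasSum
  have h := (hM.mul_right W).map (traceAddMonoidHom (Fin dx) ℝ)
    continuous_id.matrix_trace
  simp only [Function.comp_def, traceAddMonoidHom_apply, smul_mul,
    trace_smul, smul_eq_mul] at h
  convert h using 3 with t
  simp only [mul_assoc]
  rw [trace_mul_comm ((Cl A B θ)ᵀ ^ t)]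
  simp only [mul_assoc]

theorem cost_with_noise_covariance_form
    {dx du : ℕ} (γ : ℝ) (hγ : γ ∈ Set.Ioo (0:ℝ) 1)
    (A : Matrix (Fin dx) (Fin dx) ℝ) (B : Matrix (Fin dx) (Fin du) ℝ)
    (Q : Matrix (Fin dx) (Fin dx) ℝ) (R : Matrix (Fin du) (Fin du) ℝ)
    (θ : Matrix (Fin du) (Fin dx) ℝ) (hθ : IsStable γ (Cl A B θ))
    (S1 Sw : Matrix (Fin dx) (Fin dx) ℝ)
    (Sig : ℕ → Matrix (Fin dx) (Fin dx) ℝ) (hSig0 : Sig 0 = S1)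
    (hSigRec : ∀ t : ℕ, Sig (t + 1) = Cl A B θ * Sig t * (Cl A B θ)ᵀ + Sw) :
    HasSum (fun t : ℕ => (1 - γ) * γ ^ t * ((Q + θᵀ * R * θ) * Sig t).trace)
      ((1 - γ) * (Mmat γ A B Q R θ * S1).trace + γ * (Mmat γ A B Q R θ * Sw).trace) := by
  have hinit := (hasSum_trace_Mmat_mul hγ.1 Q R hθ S1).mul_left (1 - γ)
  have hnoise := hasSum_geometric_mul_sum_range (abs_lt.mpr ⟨by linarith [hγ.1], hγ.2⟩)
    (hasSum_trace_Mmat_mul hγ.1 Q R hθ Sw)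
  refine (hinit.add hnoise).congr_fun fun t => ?_
  rw [eq_pow_mul_mul_pow_add_sum_range hSigRec, hSig0, mul_add, trace_add, mul_sum,
    trace_sum]
  ring
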